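/- There exists a linear automorphism g ∈ GL₄(ℚ) such that precomposition with g maps the set of eight hyperplanes of ℚ⁴ defined by the linear forms x−t, x+t, y−t, y+t, z−t, z+t, x+y+z+t, x+y+z−t (arrangement no. 85: a cube together with two planes through three vertices each) bijectively onto the set of eight hyperplanes defined by the forms σ₁x+σ₂y+σ₃z−t for (σ₁,σ₂,σ₃) ∈ {±1}³ (the faces of a symmetric octahedron). Equivalently, for each of the eight listed forms ℓ there are a sign pattern (σ₁,σ₂,σ₃) ∈ {±1}³ and a nonzero scalar c ∈ ℚ with ℓ∘g = c·(σ₁x+σ₂y+σ₃z−t), and this correspondence is a bijection of the two sets of hyperplanes. -/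

import Mathlib

/-!
On the affine chart `t = 1` both arrangements consist of four pairs of planes `n · (x, y, z) = ±1`,
with normals `e₁, e₂, e₃, e₁ + e₂ + e₃` for the cube and `(1,-1,-1), (-1,1,-1), (-1,-1,1), (-1,-1,-1)`
for the octahedron. In both quadruples the fourth normal is the sum of the other three, so the linear
map of `ℚ³` sending `eᵢ` to the `i`-th octahedron normal matches the normals, and extending it by the
identity on `t` matches the planes.
-/

noncomputable section

open Matrix

namespace Arr85Octahedron

/-- Coefficient vectors of the eight forms
`x−t, x+t, y−t, y+t, z−t, z+t, x+y+z+t, x+y+z−t` of arrangement no. 85. -/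
def cubeL : Fin 8 → Fin 4 → ℚ :=
  ![![1,0,0,-1], ![1,0,0,1], ![0,1,0,-1], ![0,1,0,1],
    ![0,0,1,-1], ![0,0,1,1], ![1,1,1,1], ![1,1,1,-1]]

/-- A sign: `true ↦ 1`, `false ↦ -1`. -/
def sgn (b : Bool) : ℚ := if b then 1 else -1

/-- The coefficient vector of the octahedron face form `σ₁x+σ₂y+σ₃z−t`
attached to the sign pattern `(σ₁,σ₂,σ₃) ∈ {±1}³` encoded by `s`. -/
def octL (s : Fin 3 → Bool) : Fin 4 → ℚ :=
  ![sgn (s 0), sgn (s 1), sgn (s 2), -1]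

/-- Acting on coefficient rows, row `i` is the image of `eᵢ`. -/
def cubeToOctahedron : Matrix (Fin 4) (Fin 4) ℚ :=
  !![1, -1, -1, 0; -1, 1, -1, 0; -1, -1, 1, 0; 0, 0, 0, 1]

def octahedronToCube : Matrix (Fin 4) (Fin 4) ℚ :=
  !![0, -1/2, -1/2, 0; -1/2, 0, -1/2, 0; -1/2, -1/2, 0, 0; 0, 0, 0, 1]

theorem cubeToOctahedron_mul_octahedronToCube :
    cubeToOctahedron * octahedronToCube = 1 := by
  ext i j
  fin_cases i <;> fin_cases j <;>
    norm_num [cubeToOctahedron, octahedronToCube, mul_apply, Fin.sum_univ_four,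
      cons_val_two, cons_val_three]

instance : Invertible cubeToOctahedron :=
  invertibleOfRightInverse _ _ cubeToOctahedron_mul_octahedronToCube

def faceSigns : Fin 8 → Fin 3 → Bool :=
  ![![true, false, false], ![false, true, true], ![false, true, false], ![true, false, true],
    ![false, false, true], ![true, true, false], ![true, true, true], ![false, false, false]]

theorem faceSigns_bijective : Function.Bijective faceSigns := by decide

/-- The matrix fixes the `t`-coefficient, and every octahedron form has `t`-coefficient `-1`. -/
def faceScale (i : Fin 8) : ℚ := -cubeL i 3

theorem faceScale_ne_zero (i : Fin 8) : faceScale i ≠ 0 := by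
  fin_cases i <;> norm_num [faceScale, cubeL, cons_val_three]

theorem cubeL_vecMul_cubeToOctahedron (i : Fin 8) :
    cubeL i ᵥ* cubeToOctahedron = faceScale i • octL (faceSigns i) := by
  ext j
  fin_cases i <;> fin_cases j <;>
    norm_num [cubeL, cubeToOctahedron, faceScale, faceSigns, octL, sgn, vecMul, dotProduct,
      Fin.sum_univ_four, cons_val_two, cons_val_three]

/-- There is a linear automorphism `g ∈ GL₄(ℚ)` such that precomposing the
eight forms of arrangement no. 85 with `g` yields, up to nonzero scalars and
bijectively, the eight face forms `σ₁x+σ₂y+σ₃z−t`, `(σ₁,σ₂,σ₃) ∈ {±1}³`, of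
the symmetric octahedron; i.e. `g` carries the hyperplane configuration of the
octahedron onto that of arrangement no. 85. -/
theorem arrangement85_is_octahedron :
    ∃ (g : (Fin 4 → ℚ) ≃ₗ[ℚ] (Fin 4 → ℚ)) (e : Fin 8 ≃ (Fin 3 → Bool)),
      ∀ i : Fin 8, ∃ c : ℚ, c ≠ 0 ∧
        ∀ v : Fin 4 → ℚ, cubeL i ⬝ᵥ g v = c * (octL (e i) ⬝ᵥ v) := by
  refine ⟨cubeToOctahedron.toLinearEquiv' inferInstance, .ofBijective _ faceSigns_bijective,
    fun i => ⟨faceScale i, faceScale_ne_zero i, fun v => ?_⟩⟩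
  show cubeL i ⬝ᵥ cubeToOctahedron *ᵥ v = _
  rw [dotProduct_mulVec, cubeL_vecMul_cubeToOctahedron, smul_dotProduct, smul_eq_mul,
    Equiv.ofBijective_apply]

end Arr85Octahedron
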